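/- arXiv:2505.07706 — 2 statements merged into one kernel-verified Lean document; each statement's English description precedes it below -/
import Mathlib

section
/- Let S = {x ∈ {0,1,2}^n : x has exactly one coordinate equal to 2}. Then any 2-trifferent code C ⊆ S has |C| ≤ 5. -/
/-- Three ternary words `a`, `b`, `c` triffer at position `i` if their `i`-th
coordinates take all three values `0, 1, 2`. -/
def Triffers {n : ℕ} (a b c : Fin n → Fin 3) (i : Fin n) : Prop :=
  ({a i, b i, c i} : Finset (Fin 3)) = Finset.univ

instance {n : ℕ} (a b c : Fin n → Fin 3) (i : Fin n) : Decidable (Triffers a b c i) := by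
  unfold Triffers; infer_instance

/-- The number of positions where `a`, `b`, `c` triffer. -/
def trifferCount {n : ℕ} (a b c : Fin n → Fin 3) : ℕ :=
  (Finset.univ.filter fun i => Triffers a b c i).card

/-- A code is `m`-trifferent if every three distinct codewords triffer in at
least `m` positions. -/
def IsTrifferent {n : ℕ} (m : ℕ) (C : Finset (Fin n → Fin 3)) : Prop :=
  ∀ a ∈ C, ∀ b ∈ C, ∀ c ∈ C, a ≠ b → a ≠ c → b ≠ c → m ≤ trifferCount a b c

/-- `T n m` is the maximum size of an `m`-trifferent code of length `n`. -/
noncomputable def T (n m : ℕ) : ℕ :=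
  sSup {k | ∃ C : Finset (Fin n → Fin 3), IsTrifferent m C ∧ C.card = k}

/-!
Give every codeword of `C` its unique position of a `2`. Three words can only triffer at
their three positions, so in a `2`-trifferent code at most one of these fails, and two
codewords never share a position. Fix `x ∈ C` with position `i`. The other codewords take
values in `{0, 1}` at `i`; we show no three of them agree there, so `C` has at most
`1 + 2 * 2` words. If `y, z, w` agree at `i`, the triples `xyz`, `xyw`, `xzw` do not triffer
at `i`, hence triffer at the positions of their other two words. As a trifferent column
is determined by two of its entries, `z` and `w` agree at the position of `y` and `y` and
`w` agree at the position of `z`, so `yzw` triffers at most once.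
-/

open Finset

section Triffers

variable {n : ℕ} {a b c d : Fin n → Fin 3} {i j k : Fin n}

theorem triffers_iff : Triffers a b c i ↔ a i ≠ b i ∧ a i ≠ c i ∧ b i ≠ c i := by
  have key : ∀ u v w : Fin 3, ({u, v, w} : Finset (Fin 3)) = univ ↔ u ≠ v ∧ u ≠ w ∧ v ≠ w := by
    decide
  exact key _ _ _

theorem Triffers.eq_two (h : Triffers a b c i) : a i = 2 ∨ b i = 2 ∨ c i = 2 := by
  have : (2 : Fin 3) ∈ ({a i, b i, c i} : Finset (Fin 3)) := h ▸ mem_univ _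
  simpa [eq_comm] using this

theorem Triffers.apply_eq_of_triffers (h : Triffers a b c i) (h' : Triffers a b d i) :
    c i = d i := by
  have key : ∀ u v w t : Fin 3, ({u, v, w} : Finset (Fin 3)) = univ →
      ({u, v, t} : Finset (Fin 3)) = univ → w = t := by
    decide
  exact key _ _ _ _ h h'

theorem Triffers.of_not_triffers (ha : ∀ l, a l = 2 → l = i) (hb : ∀ l, b l = 2 → l = j)
    (hc : ∀ l, c l = 2 → l = k) (h2 : 2 ≤ trifferCount a b c) (hi : ¬Triffers a b c i) :
    Triffers a b c j ∧ Triffers a b c k := by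
  have hsub : univ.filter (Triffers a b c ·) ⊆ {j, k} := by
    intro l hl
    rw [mem_filter_univ] at hl
    rcases hl.eq_two with h | h | h
    · exact absurd (ha l h ▸ hl) hi
    · simp [hb l h]
    · simp [hc l h]
  have heq := eq_of_subset_of_card_le hsub (card_le_two.trans h2)
  exact ⟨(mem_filter_univ _).1 (heq ▸ mem_insert_self j {k}),
    (mem_filter_univ _).1 (heq ▸ mem_insert_of_mem (mem_singleton_self k))⟩

end Triffers

namespace IsTrifferent

variable {n : ℕ} {C : Finset (Fin n → Fin 3)} {x y : Fin n → Fin 3} {i : Fin n}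

theorem apply_ne_two (htr : IsTrifferent 2 C) (hS : ∀ x ∈ C, ∃! i, x i = 2)
    (hC : 3 ≤ #C) (hx : x ∈ C) (hy : y ∈ C) (hyx : y ≠ x) (hxi : x i = 2) : y i ≠ 2 := by
  intro hyi
  obtain ⟨c, hc, hcxy⟩ := exists_mem_notMem_of_card_lt_card
    ((card_le_two (a := x) (b := y)).trans_lt hC)
  simp only [mem_insert, mem_singleton, not_or] at hcxy
  have hxU : ∀ l, x l = 2 → l = i := fun l hl => (hS x hx).unique hl hxi
  have hyU : ∀ l, y l = 2 → l = i := fun l hl => (hS y hy).unique hl hyi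
  obtain ⟨k, -, hcU⟩ := hS c hc
  have hnot : ¬Triffers x y c i := fun h => (triffers_iff.1 h).1 (hxi.trans hyi.symm)
  exact hnot (Triffers.of_not_triffers hxU hyU hcU
    (htr x hx y hy c hc hyx.symm (Ne.symm hcxy.1) (Ne.symm hcxy.2)) hnot).1

theorem card_filter_apply_eq_le_two (htr : IsTrifferent 2 C) (hS : ∀ x ∈ C, ∃! i, x i = 2)
    (hx : x ∈ C) (hxU : ∀ l, x l = 2 → l = i) (v : Fin 3) :
    #{y ∈ C.erase x | y i = v} ≤ 2 := by
  by_contra! hlt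
  obtain ⟨y, hy, z, hz, w, hw, hyz, hyw, hzw⟩ := two_lt_card.1 hlt
  simp only [mem_filter, mem_erase] at hy hz hw
  obtain ⟨⟨hyx, hyC⟩, hyv⟩ := hy
  obtain ⟨⟨hzx, hzC⟩, hzv⟩ := hz
  obtain ⟨⟨hwx, hwC⟩, hwv⟩ := hw
  obtain ⟨j, -, hyU⟩ := hS y hyC
  obtain ⟨k, -, hzU⟩ := hS z hzC
  obtain ⟨l, -, hwU⟩ := hS w hwC
  have hxyz := htr x hx y hyC z hzC hyx.symm hzx.symm hyz
  have hxyw := htr x hx y hyC w hwC hyx.symm hwx.symm hyw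
  have hxzy := htr x hx z hzC y hyC hzx.symm hyx.symm hyz.symm
  have hxzw := htr x hx z hzC w hwC hzx.symm hwx.symm hzw
  have hyzw := htr y hyC z hzC w hwC hyz hyw hzw
  have hnot : ∀ {b c : Fin n → Fin 3}, b i = v → c i = v → ¬Triffers x b c i :=
    fun hb hc h => (triffers_iff.1 h).2.2 (hb.trans hc.symm)
  have hzwj : z j = w j :=
    (Triffers.of_not_triffers hxU hyU hzU hxyz (hnot hyv hzv)).1.apply_eq_of_triffers
      (Triffers.of_not_triffers hxU hyU hwU hxyw (hnot hyv hwv)).1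
  have hywk : y k = w k :=
    (Triffers.of_not_triffers hxU hzU hyU hxzy (hnot hzv hyv)).1.apply_eq_of_triffers
      (Triffers.of_not_triffers hxU hzU hwU hxzw (hnot hzv hwv)).1
  have hyzwk := (Triffers.of_not_triffers hyU hzU hwU hyzw
    (fun h => (triffers_iff.1 h).2.2 hzwj)).1
  exact (triffers_iff.1 hyzwk).2.1 hywk

end IsTrifferent

theorem stmt7 (n : ℕ) (C : Finset (Fin n → Fin 3))
    (hS : ∀ x ∈ C, (Finset.univ.filter fun i => x i = 2).card = 1)
    (htr : IsTrifferent 2 C) : C.card ≤ 5 := by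
  have hS' : ∀ x ∈ C, ∃! i, x i = 2 :=
    fun x hx => (Fintype.existsUnique_iff_card_one _).2 (hS x hx)
  by_contra! hC
  obtain ⟨x, hx⟩ : C.Nonempty := card_pos.1 (by omega)
  obtain ⟨i, hxi, hxU⟩ := hS' x hx
  have hmaps : ∀ y ∈ C.erase x, y i ∈ univ.erase 2 := fun y hy =>
    mem_erase.2 ⟨htr.apply_ne_two hS' (by omega) hx (mem_of_mem_erase hy)
      (ne_of_mem_erase hy) hxi, mem_univ _⟩
  have hfibers := card_le_mul_card_image_of_maps_to hmaps 2
    (fun v _ => htr.card_filter_apply_eq_le_two hS' hx hxU v)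
  rw [card_erase_of_mem hx, card_erase_of_mem (mem_univ _), card_univ, Fintype.card_fin]
    at hfibers
  omega
end

section
/- T(n, 2ℓ+1) ≤ (3/2)^n · (C(n,ℓ)/C(n,2ℓ)) · 4(2ℓ+1), where T(n,m) is the maximum size of an m-trifferent ternary code of length n. -/
open Finset

section Agreement

variable {ι α : Type*} [Fintype ι] [DecidableEq α]

def agreeSet (w q : ι → α) : Finset ι := {i | w i = q i}

variable [DecidableEq ι] [Fintype α]

lemma card_filter_agreeSet_eq (w : ι → α) (A : Finset ι) :
    #{q | agreeSet w q = A} = (Fintype.card α - 1) ^ (Fintype.card ι - #A) := by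
  have hfiber : ({q | agreeSet w q = A} : Finset (ι → α)) =
      Fintype.piFinset fun i => if i ∈ A then {w i} else {w i}ᶜ := by
    ext q
    simp only [mem_filter, mem_univ, true_and, Fintype.mem_piFinset, agreeSet, Finset.ext_iff]
    refine forall_congr' fun i => ?_
    split_ifs with hi <;> simp [hi, eq_comm]
  simp only [hfiber, Fintype.card_piFinset, apply_ite card, card_singleton, card_compl]
  rw [prod_ite, prod_const_one, one_mul, prod_const, filter_notMem_eq_sdiff, card_univ_sdiff]

lemma card_filter_card_agreeSet_eq (w : ι → α) (k : ℕ) :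
    #{q | #(agreeSet w q) = k} =
      (Fintype.card ι).choose k * (Fintype.card α - 1) ^ (Fintype.card ι - k) := by
  rw [card_eq_sum_card_fiberwise (f := agreeSet w) (t := powersetCard k univ)
    fun q hq => by simpa using hq]
  rw [sum_congr rfl fun A hA => ?_, sum_const, card_powersetCard, card_univ, smul_eq_mul]
  rw [filter_filter, ← (mem_powersetCard_univ.mp hA), ← card_filter_agreeSet_eq w A]
  congr 1
  exact filter_congr fun q _ => and_iff_right_of_imp fun h => h ▸ rfl

end Agreement

section Trifferent

variable {n : ℕ}

lemma Triffers.mem {a b c : Fin n → Fin 3} {i : Fin n} (h : Triffers a b c i) (x : Fin 3) :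
    x = a i ∨ x = b i ∨ x = c i := by
  have hx : x ∈ ({a i, b i, c i} : Finset (Fin 3)) := h ▸ mem_univ x
  simpa using hx

lemma Triffers.not_eq_add_one_iff {a b c : Fin n → Fin 3} {i : Fin n} (h : Triffers a b c i) :
    ¬(b i = a i + 1 ↔ c i = a i + 1) := by
  unfold Triffers at h
  generalize a i = x, b i = y, c i = z at h ⊢
  revert x y z
  decide

lemma exists_triffers_of_card_agreeSet_add_lt {a w₁ w₂ q : Fin n → Fin 3}
    (h : #(agreeSet w₁ q) + #(agreeSet w₂ q) < trifferCount a w₁ w₂) :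
    ∃ i, Triffers a w₁ w₂ i ∧ a i = q i := by
  obtain ⟨i, hi, hi'⟩ := exists_mem_notMem_of_card_lt_card ((card_union_le _ _).trans_lt h)
  simp only [mem_filter, mem_univ, true_and] at hi
  simp only [agreeSet, mem_union, mem_filter, mem_univ, true_and, not_or] at hi'
  refine ⟨i, hi, ?_⟩
  rcases hi.mem (q i) with h | h | h
  · exact h.symm
  · exact absurd h.symm hi'.1
  · exact absurd h.symm hi'.2

lemma IsTrifferent.card_filter_card_agreeSet_le {m ℓ : ℕ} {C : Finset (Fin n → Fin 3)}
    (hC : IsTrifferent m C) (hℓ : 2 * ℓ < m) (q : Fin n → Fin 3) :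
    #{w ∈ C | #(agreeSet w q) = ℓ} ≤ 2 ^ ℓ + 1 := by
  set S := {w ∈ C | #(agreeSet w q) = ℓ}
  obtain hS | ⟨a, ha⟩ := S.eq_empty_or_nonempty
  · simp [hS]
  have hinj :
      Set.InjOn (fun w : Fin n → Fin 3 => {i ∈ agreeSet a q | w i = q i + 1}) (S.erase a) := by
    intro w₁ hw₁ w₂ hw₂ heq
    by_contra hne
    simp only [coe_erase, Set.mem_sdiff, mem_coe, S, mem_filter, Set.mem_singleton_iff] at hw₁ hw₂
    have htriff :=
      hC a (mem_filter.mp ha).1 w₁ hw₁.1.1 w₂ hw₂.1.1 (Ne.symm hw₁.2) (Ne.symm hw₂.2) hne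
    obtain ⟨i, hi, hai⟩ := exists_triffers_of_card_agreeSet_add_lt (a := a) (w₁ := w₁)
      (w₂ := w₂) (q := q) (by rw [hw₁.1.2, hw₂.1.2]; omega)
    have hmem := Finset.ext_iff.mp heq i
    simp only [mem_filter, agreeSet, mem_univ, true_and, hai] at hmem
    exact hi.not_eq_add_one_iff (by rwa [hai])
  have hcard := card_le_card_of_injOn _ (fun w _ => mem_powerset.mpr (filter_subset _ _)) hinj
  rw [card_powerset, (mem_filter.mp ha).2] at hcard
  have := card_erase_add_one ha
  omega

lemma IsTrifferent.card_mul_le {m ℓ : ℕ} {C : Finset (Fin n → Fin 3)} (hC : IsTrifferent m C)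
    (hℓ : 2 * ℓ < m) : #C * (n.choose ℓ * 2 ^ (n - ℓ)) ≤ 3 ^ n * (2 ^ ℓ + 1) := by
  have h := card_mul_le_card_mul (s := C) (t := univ) (fun w q => #(agreeSet w q) = ℓ)
    (m := n.choose ℓ * 2 ^ (n - ℓ)) (n := 2 ^ ℓ + 1)
    (fun w _ => by simp [bipartiteAbove, card_filter_card_agreeSet_eq])
    (fun q _ => hC.card_filter_card_agreeSet_le hℓ q)
  simpa using h

end Trifferent

lemma choose_two_mul_mul_four_pow_le (n ℓ : ℕ) :
    n.choose (2 * ℓ) * 4 ^ ℓ ≤ (2 * ℓ + 1) * n.choose ℓ ^ 2 :=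
  calc n.choose (2 * ℓ) * 4 ^ ℓ
      ≤ n.choose (2 * ℓ) * ((2 * ℓ + 1) * (2 * ℓ).choose ℓ) :=
        Nat.mul_le_mul_left _ (Nat.four_pow_le_two_mul_add_one_mul_central_binom ℓ)
    _ = (2 * ℓ + 1) * (n.choose ℓ * (n - ℓ).choose ℓ) := by
        rw [mul_left_comm, Nat.choose_mul (by omega), show 2 * ℓ - ℓ = ℓ by omega]
    _ ≤ (2 * ℓ + 1) * n.choose ℓ ^ 2 := by
        rw [sq]
        gcongr
        omega

lemma exists_isTrifferent_card_eq_T (n m : ℕ) :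
    ∃ C : Finset (Fin n → Fin 3), IsTrifferent m C ∧ #C = T n m :=
  Nat.sSup_mem (s := {k | ∃ C : Finset (Fin n → Fin 3), IsTrifferent m C ∧ #C = k})
    ⟨0, ∅, by simp [IsTrifferent]⟩
    ⟨Fintype.card (Fin n → Fin 3), by rintro _ ⟨C, -, rfl⟩; exact card_le_univ C⟩

theorem stmt9 (n ℓ : ℕ) (h : 2 * ℓ ≤ n) :
    (T n (2 * ℓ + 1) : ℝ) ≤
      (3 / 2) ^ n * ((n.choose ℓ : ℝ) / (n.choose (2 * ℓ) : ℝ)) * (4 * (2 * ℓ + 1)) := by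
  obtain ⟨C, hC, hCT⟩ := exists_isTrifferent_card_eq_T n (2 * ℓ + 1)
  have hcount : (#C * (n.choose ℓ * 2 ^ (n - ℓ)) : ℝ) ≤ 3 ^ n * (2 ^ ℓ + 1) := by
    exact_mod_cast hC.card_mul_le (by omega)
  have hbinom : (n.choose (2 * ℓ) * 4 ^ ℓ : ℝ) ≤ (2 * ℓ + 1) * n.choose ℓ ^ 2 := by
    exact_mod_cast choose_two_mul_mul_four_pow_le n ℓ
  have hX : (0 : ℝ) < n.choose ℓ := by exact_mod_cast Nat.choose_pos (by omega)
  have hY : (0 : ℝ) < n.choose (2 * ℓ) := by exact_mod_cast Nat.choose_pos h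
  have h2 : (2 : ℝ) ^ n = 2 ^ (n - ℓ) * 2 ^ ℓ := by rw [← pow_add, Nat.sub_add_cancel (by omega)]
  have h4 : (4 : ℝ) ^ ℓ = 2 ^ ℓ * 2 ^ ℓ := by rw [← mul_pow]; norm_num
  have h1 : (1 : ℝ) ≤ 2 ^ ℓ := one_le_pow₀ (by norm_num)
  rw [← hCT, div_pow, h2, div_mul_div_comm, mul_comm_div, ← mul_div_assoc,
    le_div_iff₀ (by positivity)]
  refine le_of_mul_le_mul_right ?_ hX
  calc (#C : ℝ) * (2 ^ (n - ℓ) * 2 ^ ℓ * n.choose (2 * ℓ)) * n.choose ℓ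
      = (#C * (n.choose ℓ * 2 ^ (n - ℓ))) * (2 ^ ℓ * n.choose (2 * ℓ)) := by ring
    _ ≤ 3 ^ n * (2 ^ ℓ + 1) * (2 ^ ℓ * n.choose (2 * ℓ)) := by gcongr
    _ ≤ 3 ^ n * (2 ^ ℓ + 2 ^ ℓ) * (2 ^ ℓ * n.choose (2 * ℓ)) := by gcongr
    _ = 3 ^ n * 2 * (n.choose (2 * ℓ) * 4 ^ ℓ) := by rw [h4]; ring
    _ ≤ 3 ^ n * 2 * ((2 * ℓ + 1) * n.choose ℓ ^ 2) := by gcongr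
    _ ≤ 3 ^ n * n.choose ℓ * (4 * (2 * ℓ + 1)) * n.choose ℓ := by
        linarith [show (0 : ℝ) ≤ 3 ^ n * ((2 * ℓ + 1) * n.choose ℓ ^ 2) by positivity]
end
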